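/- arXiv:2103.09719 — 6 statements merged into one kernel-verified Lean document; each statement's English description precedes it below -/
import Mathlib

section
/- If H₁ and H₂ are subgroups of a group G, each commensurable with some normal subgroup of G, then H₁ ∩ H₂ is commensurable with a normal subgroup of G. -/
/-- A subgroup is subnormal if it is joined to the whole group by a finite
chain of successive normal subgroups. -/
def IsSubnormal {G : Type*} [Group G] (H : Subgroup G) : Prop :=
  ∃ n : ℕ, ∃ c : ℕ → Subgroup G, c 0 = H ∧ c n = ⊤ ∧
    ∀ i < n, c i ≤ c (i + 1) ∧ ((c i).subgroupOf (c (i + 1))).Normal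

/-- A group has finite rank if there is `r` such that every finitely generated
subgroup can be generated by at most `r` elements. -/
def HasFiniteRank (G : Type*) [Group G] : Prop :=
  ∃ r : ℕ, ∀ H : Subgroup G, H.FG →
    ∃ S : Finset G, S.card ≤ r ∧ Subgroup.closure (S : Set G) = H

/-- A subgroup is a cn-subgroup if it is commensurable with some normal subgroup. -/
def IsCN {G : Type*} [Group G] (H : Subgroup G) : Prop :=
  ∃ N : Subgroup G, N.Normal ∧ Subgroup.Commensurable H N

/-- A subgroup is a cf-subgroup if its normal core has finite index in it. -/
def IsCF {G : Type*} [Group G] (H : Subgroup G) : Prop :=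
  H.normalCore.relIndex H ≠ 0

namespace Subgroup.Commensurable

variable {G : Type*} [Group G]

theorem inf_right {A B : Subgroup G} (h : Commensurable A B) (C : Subgroup G) :
    Commensurable (A ⊓ C) (B ⊓ C) :=
  ⟨relIndex_inter_ne_zero h.1 C, relIndex_inter_ne_zero h.2 C⟩

theorem inf {A B C D : Subgroup G} (hAB : Commensurable A B) (hCD : Commensurable C D) :
    Commensurable (A ⊓ C) (B ⊓ D) := by
  have hCD' : Commensurable (C ⊓ B) (D ⊓ B) := hCD.inf_right B
  rw [inf_comm C, inf_comm D] at hCD'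
  exact (hAB.inf_right C).trans hCD'

end Subgroup.Commensurable

theorem inf_isCN {G : Type*} [Group G] (H₁ H₂ : Subgroup G)
    (h1 : IsCN H₁) (h2 : IsCN H₂) : IsCN (H₁ ⊓ H₂) := by
  obtain ⟨N₁, hN₁, hc₁⟩ := h1
  obtain ⟨N₂, hN₂, hc₂⟩ := h2
  exact ⟨N₁ ⊓ N₂, Subgroup.normal_inf_normal N₁ N₂, hc₁.inf hc₂⟩
end

section
/- If H₁ and H₂ are subgroups of a group G, each having finite index over its normal core in G (cf-subgroups), and the set H₁H₂ is a subgroup, then H₁H₂ is a cf-subgroup of G. -/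
/-!
Let `N` be the join of the normal cores of `H₁` and `H₂`. It is a normal subgroup of `G` contained
in `K = H₁H₂`, hence in the core of `K`, so it suffices that `N` has finite index in `K`. In `G ⧸ N`
the image of `K` is the product of the images of `H₁` and `H₂`, and each of these is finite
because `N` contains the core of `Hᵢ`.
-/

open Pointwise

namespace Subgroup

variable {G G' : Type*} [Group G] [Group G']

theorem relIndex_ker_ne_zero_iff (f : G →* G') (H : Subgroup G) :
    f.ker.relIndex H ≠ 0 ↔ (f '' H).Finite := by
  rw [relIndex_ker, Nat.card_ne_zero, ← coe_map]
  exact (and_iff_right One.instNonempty).trans Set.finite_coe_iff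

theorem relIndex_ker_ne_zero_of_coe_eq_mul (f : G →* G') {H₁ H₂ K : Subgroup G}
    (hK : (K : Set G) = H₁ * H₂) (h₁ : f.ker.relIndex H₁ ≠ 0) (h₂ : f.ker.relIndex H₂ ≠ 0) :
    f.ker.relIndex K ≠ 0 := by
  rw [relIndex_ker_ne_zero_iff] at h₁ h₂ ⊢
  rw [hK, Set.image_mul]
  exact h₁.mul h₂

theorem relIndex_normal_ne_zero_of_coe_eq_mul {N H₁ H₂ K : Subgroup G} [N.Normal]
    (hK : (K : Set G) = H₁ * H₂) (h₁ : N.relIndex H₁ ≠ 0) (h₂ : N.relIndex H₂ ≠ 0) :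
    N.relIndex K ≠ 0 := by
  rw [← QuotientGroup.ker_mk' N] at h₁ h₂ ⊢
  exact relIndex_ker_ne_zero_of_coe_eq_mul _ hK h₁ h₂

end Subgroup

section IsCF

variable {G : Type*} [Group G] {H N : Subgroup G}

theorem IsCF.relIndex_ne_zero (hH : IsCF H) (hN : H.normalCore ≤ N) : N.relIndex H ≠ 0 :=
  fun h ↦ hH (Subgroup.relIndex_eq_zero_of_le_left hN h)

theorem isCF_of_normal_le [N.Normal] (hNH : N ≤ H) (hN : N.relIndex H ≠ 0) : IsCF H :=
  fun h ↦ hN (Subgroup.relIndex_eq_zero_of_le_left (Subgroup.normal_le_normalCore.2 hNH) h)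

end IsCF

theorem mul_isCF {G : Type*} [Group G] (H₁ H₂ : Subgroup G)
    (h1 : IsCF H₁) (h2 : IsCF H₂) (K : Subgroup G)
    (hK : (K : Set G) = {x : G | ∃ a ∈ H₁, ∃ b ∈ H₂, x = a * b}) : IsCF K := by
  have hK' : (K : Set G) = H₁ * H₂ := by
    rw [hK]
    ext x
    simp only [Set.mem_ofPred_eq, Set.mem_mul, SetLike.mem_coe, eq_comm]
  have hH₁ : H₁ ≤ K := by
    intro a ha
    rw [← SetLike.mem_coe, hK']
    exact Set.subset_mul_left _ H₂.one_mem ha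
  have hH₂ : H₂ ≤ K := by
    intro b hb
    rw [← SetLike.mem_coe, hK']
    exact Set.subset_mul_right _ H₁.one_mem hb
  set N := H₁.normalCore ⊔ H₂.normalCore
  have hNK : N ≤ K := sup_le (H₁.normalCore_le.trans hH₁) (H₂.normalCore_le.trans hH₂)
  exact isCF_of_normal_le hNK <| Subgroup.relIndex_normal_ne_zero_of_coe_eq_mul hK'
    (h1.relIndex_ne_zero le_sup_left) (h2.relIndex_ne_zero le_sup_right)
end

section
/- If a subgroup H of a group G has finite index over its core H_G, then H is commensurable with the normal subgroup H_G; conversely, if H has finite rank and is commensurable with a normal subgroup of G, then |H : H_G| is finite. -/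
/-! Let `N` be normal and commensurable with `H`, and put `K = H ⊓ N`. Every conjugate of `K` lies
in `N` with the same index `m`, so it meets `K` in a subgroup of index at most `m` in `K`. A group of
finite rank `r` has only finitely many subgroups of each finite index `n`: they are point
stabilisers of actions on `Fin n`, and there are at most `|F| ^ r` homomorphisms to a finite group
`F`, since any finitely many of them are already told apart on a subgroup generated by `r`
elements. So the core of `K` is a finite intersection of finite-index subgroups of `K`, and it lies
in the core of `H`. -/

open Subgroup Pointwise

section FiniteRank

variable {X : Type*} [Group X]

lemma card_finset_monoidHom_le {F : Type*} [Group F] [Fintype F] {r : ℕ}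
    (hr : ∀ A : Subgroup X, A.FG → ∃ S : Finset X, S.card ≤ r ∧ closure (S : Set X) = A)
    (T : Finset (X →* F)) : T.card ≤ Fintype.card F ^ r := by
  classical
  have separate : ∀ φ ψ : X →* F, ∃ x, φ ≠ ψ → φ x ≠ ψ x := fun φ ψ => by
    by_cases h : φ = ψ
    · exact ⟨1, fun h' => (h' h).elim⟩
    · obtain ⟨x, hx⟩ := DFunLike.ne_iff.mp h
      exact ⟨x, fun _ => hx⟩
  choose w hw using separate
  obtain ⟨S, hScard, hS⟩ := hr _ ⟨(T ×ˢ T).image fun p => w p.1 p.2, rfl⟩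
  have hinj : Set.InjOn (fun (φ : X →* F) (s : S) => φ s) T := by
    intro φ hφ ψ hψ h
    by_contra hne
    have heq : Set.EqOn φ ψ (closure (S : Set X)) :=
      MonoidHom.eqOn_closure fun s hs => congrFun h ⟨s, hs⟩
    rw [hS] at heq
    refine hw φ ψ hne (heq (subset_closure ?_))
    exact Finset.mem_image_of_mem (fun p => w p.1 p.2) (Finset.mk_mem_product hφ hψ)
  calc T.card ≤ (Finset.univ : Finset (S → F)).card :=
        Finset.card_le_card_of_injOn _ (fun _ _ => Finset.mem_univ _) hinj
    _ = Fintype.card F ^ S.card := by simp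
    _ ≤ Fintype.card F ^ r := Nat.pow_le_pow_right Fintype.card_pos hScard

lemma HasFiniteRank.finite_monoidHom {F : Type*} [Group F] [Finite F] (hX : HasFiniteRank X) :
    Finite (X →* F) := by
  have := Fintype.ofFinite F
  obtain ⟨r, hr⟩ := hX
  by_contra hinf
  rw [not_finite_iff_infinite] at hinf
  obtain ⟨T, hT⟩ := Infinite.exists_subset_card_eq (X →* F) (Fintype.card F ^ r + 1)
  have := card_finset_monoidHom_le hr T
  omega

lemma Subgroup.exists_eq_comap_stabilizer_of_index_eq {A : Subgroup X} {n : ℕ}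
    (hA : A.index = n) (hn : n ≠ 0) :
    ∃ (φ : X →* Equiv.Perm (Fin n)) (p : Fin n),
      A = (MulAction.stabilizer (Equiv.Perm (Fin n)) p).comap φ := by
  have : Finite (X ⧸ A) := Nat.finite_of_card_ne_zero (show A.index ≠ 0 by omega)
  have := Fintype.ofFinite (X ⧸ A)
  let e : X ⧸ A ≃ Fin n := Fintype.equivFinOfCardEq (by rw [← Nat.card_eq_fintype_card]; exact hA)
  refine ⟨e.permCongrHom.toMonoidHom.comp (MulAction.toPermHom X (X ⧸ A)), e ((1 : X) : X ⧸ A), ?_⟩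
  ext x
  simp [Equiv.permCongrHom_coe, Equiv.permCongr_apply, QuotientGroup.eq]

lemma HasFiniteRank.finite_setOf_index_eq (hX : HasFiniteRank X) {n : ℕ} (hn : n ≠ 0) :
    {A : Subgroup X | A.index = n}.Finite := by
  have := hX.finite_monoidHom (F := Equiv.Perm (Fin n))
  refine (Set.finite_range fun q : (X →* Equiv.Perm (Fin n)) × Fin n =>
    (MulAction.stabilizer (Equiv.Perm (Fin n)) q.2).comap q.1).subset ?_
  intro A hA
  obtain ⟨φ, p, rfl⟩ := exists_eq_comap_stabilizer_of_index_eq hA hn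
  exact ⟨(φ, p), rfl⟩

lemma HasFiniteRank.finite_setOf_index_le (hX : HasFiniteRank X) (c : ℕ) :
    {A : Subgroup X | A.index ≠ 0 ∧ A.index ≤ c}.Finite := by
  refine ((Set.finite_Icc 1 c).biUnion fun n hn =>
    hX.finite_setOf_index_eq (Nat.one_le_iff_ne_zero.mp hn.1)).subset ?_
  rintro A ⟨hA0, hAc⟩
  exact Set.mem_biUnion ⟨Nat.one_le_iff_ne_zero.mpr hA0, hAc⟩ rfl

lemma HasFiniteRank.of_injective {Y : Type*} [Group Y] (f : X →* Y)
    (hf : Function.Injective f) (hY : HasFiniteRank Y) : HasFiniteRank X := by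
  classical
  obtain ⟨r, hr⟩ := hY
  refine ⟨r, fun A hA => ?_⟩
  obtain ⟨T, hT⟩ := hA
  obtain ⟨S, hScard, hS⟩ :=
    hr (A.map f) ⟨T.image f, by rw [Finset.coe_image, ← MonoidHom.map_closure, hT]⟩
  have hSrange : ∀ y ∈ S, y ∈ Set.range f := fun y hy => by
    obtain ⟨x, -, hx⟩ := (hS ▸ subset_closure hy : y ∈ A.map f)
    exact ⟨x, hx⟩
  refine ⟨S.preimage f hf.injOn,
    ((Finset.card_preimage _ _ _).trans_le (Finset.card_filter_le _ _)).trans hScard, ?_⟩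
  apply map_injective hf
  rw [MonoidHom.map_closure, ← hS, Finset.coe_preimage, Set.image_preimage_eq_of_subset hSrange]

end FiniteRank

namespace Subgroup

variable {G : Type*} [Group G]

lemma index_iInf_ne_zero_of_finite_range {ι : Type*} {f : ι → Subgroup G}
    (hf : (Set.range f).Finite) (hf0 : ∀ i, (f i).index ≠ 0) : (⨅ i, f i).index ≠ 0 := by
  have := hf.to_subtype
  rw [← sInf_range, sInf_eq_iInf']
  exact index_iInf_ne_zero fun ⟨_, i, hi⟩ => hi ▸ hf0 i

lemma relIndex_normalCore_ne_zero_of_le_normal {K N : Subgroup G} (hN : N.Normal) (hKN : K ≤ N)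
    (hK : K.relIndex N ≠ 0) (hr : HasFiniteRank K) : K.normalCore.relIndex K ≠ 0 := by
  have hconj : ∀ g : ConjAct G, (g • K).relIndex N = K.relIndex N := fun g => by
    simpa only [hN.conjAct g] using relIndex_pointwise_smul g K N
  have hbound : ∀ g : ConjAct G, (g • K).relIndex K ≠ 0 ∧ (g • K).relIndex K ≤ K.relIndex N :=
    fun g => by
      have hgK : (g • K).relIndex N ≠ 0 := by rwa [hconj]
      exact ⟨mt (relIndex_eq_zero_of_le_right hKN) hgK, hconj g ▸ relIndex_le_of_le_right hKN hgK⟩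
  have hfinite : (Set.range fun g : ConjAct G => (g • K).subgroupOf K).Finite :=
    (hr.finite_setOf_index_le (K.relIndex N)).subset (Set.range_subset_iff.mpr hbound)
  rw [relIndex, normalCore_eq_iInf_conjAct, subgroupOf, comap_iInf]
  exact index_iInf_ne_zero_of_finite_range hfinite fun g => (hbound g).1

end Subgroup

theorem isCF_iff_isCN_of_finiteRank {G : Type*} [Group G] (H : Subgroup G) :
    (H.normalCore.relIndex H ≠ 0 → Subgroup.Commensurable H H.normalCore) ∧
    (HasFiniteRank H → IsCN H → H.normalCore.relIndex H ≠ 0) := by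
  refine ⟨fun hcore => ⟨by simp [relIndex_eq_one.mpr H.normalCore_le], hcore⟩, ?_⟩
  rintro hr ⟨N, hN, hHN, hNH⟩
  have hK : HasFiniteRank ↥(H ⊓ N) :=
    hr.of_injective (inclusion inf_le_left) (inclusion_injective inf_le_left)
  have hcoreK : (H ⊓ N).normalCore.relIndex H ≠ 0 :=
    relIndex_ne_zero_trans
      (relIndex_normalCore_ne_zero_of_le_normal hN inf_le_right (by rwa [inf_relIndex_right]) hK)
      (by rwa [inf_relIndex_left])
  exact mt (relIndex_eq_zero_of_le_left (normalCore_mono inf_le_left)) hcoreK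
end

section
/- Let G be a periodic group of finite rank whose derived subgroup G' is finite. Then the center Z(G) has finite index in G. -/
/-!
For a finitely generated group `H` with finitely many commutators,
`|H : Z(H)| ≤ |commutatorSet H| ^ rank H`. In `G` the commutators of any subgroup lie in the
finite group `G'`, and finite rank bounds `rank H`, so `|H : Z(H)|` is bounded uniformly over
finitely generated subgroups `H`. Such a bound passes to `G`: representatives of distinct cosets
of `Z(G)`, together with witnesses that their quotients are not central, generate a subgroup in
which the representatives still lie in distinct cosets of the centre.
-/

open Subgroup

theorem finite_and_card_le_of_forall_finset_card_le {α : Type*} {N : ℕ}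
    (h : ∀ s : Finset α, s.card ≤ N) : Finite α ∧ Nat.card α ≤ N := by
  have hfin : Finite α := by
    by_contra hinf
    rw [not_finite_iff_infinite] at hinf
    obtain ⟨s, hs⟩ := Infinite.exists_subset_card_eq α (N + 1)
    have := h s
    omega
  have := Fintype.ofFinite α
  exact ⟨hfin, Nat.card_eq_fintype_card (α := α) ▸ h Finset.univ⟩

section

variable {G : Type*} [Group G]

theorem HasFiniteRank.exists_forall_rank_closure_le (hrk : HasFiniteRank G) :
    ∃ r : ℕ, ∀ T : Finset G, Group.rank (closure (T : Set G)) ≤ r := by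
  obtain ⟨r, hr⟩ := hrk
  refine ⟨r, fun T => ?_⟩
  obtain ⟨S, hSr, hST⟩ := hr _ ⟨T, rfl⟩
  rw [← rank_congr hST]
  exact (rank_closure_finset_le_card S).trans hSr

theorem Subgroup.mapsTo_subtype_commutatorSet (H : Subgroup G) :
    Set.MapsTo H.subtype (commutatorSet H) (commutatorSet G) := by
  rintro _ ⟨a, b, rfl⟩
  exact ⟨a, b, rfl⟩

theorem Subgroup.injective_commutatorSet_restrict (H : Subgroup G) :
    (H.mapsTo_subtype_commutatorSet.restrict).Injective :=
  H.mapsTo_subtype_commutatorSet.restrict_inj.mpr H.subtype_injective.injOn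

instance [Finite (commutatorSet G)] (H : Subgroup G) : Finite (commutatorSet H) :=
  Finite.of_injective _ H.injective_commutatorSet_restrict

theorem Subgroup.card_commutatorSet_le [Finite (commutatorSet G)] (H : Subgroup G) :
    Nat.card (commutatorSet H) ≤ Nat.card (commutatorSet G) :=
  Nat.card_le_card_of_injective _ H.injective_commutatorSet_restrict

theorem Subgroup.exists_embedding_quotient_center_closure_finset
    (s : Finset (G ⧸ center G)) :
    ∃ T : Finset G, Nonempty (s ↪ closure (T : Set G) ⧸ center (closure (T : Set G))) := by
  classical
  have hw : ∀ p q : G ⧸ center G, ∃ w : G, p ≠ q → ¬Commute w (p.out⁻¹ * q.out) := by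
    intro p q
    by_cases hpq : p = q
    · exact ⟨1, fun h => (h hpq).elim⟩
    · have hnot : p.out⁻¹ * q.out ∉ center G := by
        rwa [← QuotientGroup.eq, QuotientGroup.out_eq', QuotientGroup.out_eq']
      simp only [mem_center_iff, not_forall] at hnot
      obtain ⟨w, hw⟩ := hnot
      exact ⟨w, fun _ => hw⟩
  choose w hw using hw
  set T : Finset G := s.image Quotient.out ∪ (s ×ˢ s).image fun pq => w pq.1 pq.2
  refine ⟨T, ?_⟩
  set H := closure (T : Set G)
  have hout : ∀ p ∈ s, p.out ∈ H := fun p hp =>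
    subset_closure (Finset.mem_union_left _ (Finset.mem_image_of_mem _ hp))
  have hwH : ∀ p ∈ s, ∀ q ∈ s, w p q ∈ H := fun p hp q hq =>
    subset_closure (Finset.mem_union_right _
      (Finset.mem_image_of_mem _ (Finset.mk_mem_product hp hq)))
  refine ⟨⟨fun p => ((⟨p.1.out, hout p.1 p.2⟩ : H) : H ⧸ center H), ?_⟩⟩
  rintro ⟨p, hp⟩ ⟨q, hq⟩ hpq
  by_contra hne
  rw [QuotientGroup.eq, mem_center_iff] at hpq
  exact hw p q (fun h => hne (Subtype.ext h)) congr($(hpq ⟨w p q, hwH p hp q hq⟩).1)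

theorem Subgroup.index_center_le_of_forall_closure_finset {N : ℕ}
    (h : ∀ T : Finset G, (center (closure (T : Set G))).index ≠ 0 ∧
      (center (closure (T : Set G))).index ≤ N) :
    (center G).index ≠ 0 ∧ (center G).index ≤ N := by
  have hcard (s : Finset (G ⧸ center G)) : s.card ≤ N := by
    obtain ⟨T, ⟨f⟩⟩ := exists_embedding_quotient_center_closure_finset s
    obtain ⟨hT0, hTN⟩ := h T
    have : Finite (closure (T : Set G) ⧸ center (closure (T : Set G))) :=
      Nat.finite_of_card_ne_zero hT0
    calc s.card = Nat.card s := (Nat.card_eq_finsetCard s).symm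
      _ ≤ (center (closure (T : Set G))).index := Nat.card_le_card_of_injective f f.injective
      _ ≤ N := hTN
  obtain ⟨hfin, hle⟩ := finite_and_card_le_of_forall_finset_card_le hcard
  exact ⟨Nat.card_ne_zero.mpr ⟨⟨1⟩, hfin⟩, hle⟩

end

theorem lemma_zf_general {G : Type*} [Group G]
    (hrk : HasFiniteRank G) (hfin : Finite (commutator G)) :
    (Subgroup.center G).index ≠ 0 := by
  have : Finite (commutatorSet G) :=
    (Set.toFinite (commutator G : Set G)).subset (commutator_eq_closure G ▸ subset_closure)
  obtain ⟨r, hr⟩ := hrk.exists_forall_rank_closure_le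
  refine (index_center_le_of_forall_closure_finset (N := Nat.card (commutatorSet G) ^ r)
    fun T => ?_).1
  refine ⟨FiniteIndex.index_ne_zero, (index_center_le_pow _).trans ?_⟩
  calc Nat.card (commutatorSet (closure (T : Set G))) ^ Group.rank (closure (T : Set G))
      ≤ Nat.card (commutatorSet G) ^ Group.rank (closure (T : Set G)) :=
        Nat.pow_le_pow_left (card_commutatorSet_le _) _
    _ ≤ Nat.card (commutatorSet G) ^ r := Nat.pow_le_pow_right Nat.card_pos (hr T)

theorem lemma_zf {G : Type*} [Group G] (hper : ∀ g : G, IsOfFinOrder g)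
    (hrk : HasFiniteRank G) (hfin : Finite (commutator G)) :
    (Subgroup.center G).index ≠ 0 :=
  lemma_zf_general hrk hfin
end

section
/- Let G = A ⋊ B be the semidirect product of the additive group A of rational numbers by the multiplicative group B of positive rational numbers acting by multiplication. Then every proper non-trivial subgroup of A fails to be commensurable with any normal subgroup of G, yet every subnormal subgroup of G of infinite rank is normal (indeed every subnormal subgroup not contained in A is normal). -/
/-- The multiplicative group of positive rationals, as a subgroup of ℚˣ. -/
def posRatUnits : Subgroup ℚˣ where
  carrier := {u : ℚˣ | (0 : ℚ) < (u : ℚ)}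
  mul_mem' := by
    intro a b ha hb
    have ha' : (0:ℚ) < (a : ℚ) := ha
    have hb' : (0:ℚ) < (b : ℚ) := hb
    show (0:ℚ) < ((a*b : ℚˣ) : ℚ)
    push_cast
    exact mul_pos ha' hb'
  one_mem' := by show (0:ℚ) < ((1:ℚˣ):ℚ); norm_num
  inv_mem' := by
    intro a ha
    have : (0:ℚ) < (a : ℚ) := ha
    simpa using inv_pos.mpr this

/-- The action of the positive rationals on the (multiplicatively written)
additive group of the rationals, by multiplication. -/
def ratMulAction : posRatUnits →* MulAut (Multiplicative ℚ) where
  toFun u := AddEquiv.toMultiplicative (DistribMulAction.toAddEquiv ℚ (u : ℚˣ))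
  map_one' := by ext x; simp [DistribMulAction.toAddEquiv]
  map_mul' := by intro a b; ext x; simp [DistribMulAction.toAddEquiv, mul_smul]

/-- The holomorph-like semidirect product ℚ ⋊ ℚ>0. -/
abbrev HolQ : Type := SemidirectProduct (Multiplicative ℚ) posRatUnits ratMulAction

/-- The copy of the additive rationals inside the semidirect product. -/
def Asub : Subgroup HolQ := SemidirectProduct.inl.range

section

variable {G : Type*} [Group G]

theorem IsSubnormal.isSubnormal {H : Subgroup G} (hH : IsSubnormal H) : H.IsSubnormal := by
  obtain ⟨n, c, rfl, hn, hc⟩ := hH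
  suffices ∀ j ≤ n, (c (n - j)).IsSubnormal by simpa using this n le_rfl
  intro j hj
  induction j with
  | zero => simp [hn]
  | succ j ih =>
    obtain ⟨hle, hnormal⟩ := hc (n - (j + 1)) (by omega)
    rw [show n - (j + 1) + 1 = n - j by omega] at hle hnormal
    exact .step _ _ hle (ih (by omega)) hnormal

theorem Subgroup.IsSubnormal.le_of_not_le {A H : Subgroup G}
    (hA : ∀ K : Subgroup G, A ≤ normalizer K → ¬ K ≤ A → A ≤ K)
    (hH : H.IsSubnormal) (hHA : ¬ H ≤ A) : A ≤ H := by
  induction hH with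
  | top => exact le_top
  | step H K hHK _ _ ih =>
    exact hA H ((ih fun hKA => hHA (hHK.trans hKA)).trans
      (le_normalizer_of_normal_subgroupOf hHK)) hHA

theorem Subgroup.eq_top_of_index_ne_zero [RootableBy G ℕ] {H : Subgroup G} (hH : H.index ≠ 0) :
    H = ⊤ := by
  refine eq_top_iff.2 fun g _ => ?_
  rw [← RootableBy.root_cancel g (Nat.factorial_ne_zero H.index)]
  exact pow_mem_of_index_ne_zero_of_dvd hH _ fun m hm hmH => Nat.dvd_factorial hm hmH

theorem Subgroup.normal_of_ker_le {G' : Type*} [CommGroup G'] (f : G →* G') {H : Subgroup G}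
    (hH : f.ker ≤ H) : H.Normal := by
  rw [← comap_map_eq_self hH]
  exact (normal_of_isMulCommutative _).comap f

def IsLocallyCyclic (G : Type*) [Group G] : Prop :=
  ∀ K : Subgroup G, K.FG → IsCyclic K

theorem IsLocallyCyclic.of_injective {G' : Type*} [Group G'] (h : IsLocallyCyclic G')
    (f : G →* G') (hf : Function.Injective f) : IsLocallyCyclic G := by
  classical
  rintro K ⟨S, rfl⟩
  have := h _ ⟨S.image f, by rw [Finset.coe_image, ← MonoidHom.map_closure]⟩
  exact ((Subgroup.equivMapOfInjective _ f hf).isCyclic).2 this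

theorem IsLocallyCyclic.hasFiniteRank (h : IsLocallyCyclic G) : HasFiniteRank G := by
  refine ⟨1, fun K hK => ?_⟩
  obtain ⟨g, rfl⟩ := (K.isCyclic_iff_exists_zpowers_eq_top).1 (h K hK)
  exact ⟨{g}, by simp, by rw [Finset.coe_singleton, Subgroup.zpowers_eq_closure]⟩

end

section

open Multiplicative

instance : RootableBy (Multiplicative ℚ) ℕ where
  root x n := ofAdd (toAdd x / n)
  root_zero x := by simp
  root_cancel x hn := by
    rw [← ofAdd_nsmul, nsmul_eq_mul, mul_div_cancel₀ _ (Nat.cast_ne_zero.2 hn), ofAdd_toAdd]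

theorem Rat.exists_intCast_eq_mul_of_den_dvd {q : ℚ} {D : ℕ} (hD : q.den ∣ D) :
    ∃ k : ℤ, (k : ℚ) = q * D := by
  obtain ⟨m, rfl⟩ := hD
  exact ⟨q.num * m, by push_cast; rw [← Rat.mul_den_eq_num]; ring⟩

theorem isLocallyCyclic_multiplicative_rat : IsLocallyCyclic (Multiplicative ℚ) := by
  rintro _ ⟨S, rfl⟩
  obtain ⟨D, hD0, hD⟩ : ∃ D : ℕ, D ≠ 0 ∧ ∀ q ∈ S, (toAdd q).den ∣ D :=
    ⟨_, Finset.prod_ne_zero_iff.2 fun q _ => (toAdd q).den_nz,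
      fun q hq => Finset.dvd_prod_of_mem _ hq⟩
  suffices Subgroup.closure ↑S ≤ Subgroup.zpowers (ofAdd (D : ℚ)⁻¹) from
    Subgroup.isCyclic_of_le this
  refine (Subgroup.closure_le _).2 fun q hq => ?_
  obtain ⟨k, hk⟩ := Rat.exists_intCast_eq_mul_of_den_dvd (hD q hq)
  refine Subgroup.mem_zpowers_iff.2 ⟨k, ?_⟩
  rw [← ofAdd_zsmul, zsmul_eq_mul, hk, mul_inv_cancel_right₀ (Nat.cast_ne_zero.2 hD0),
    ofAdd_toAdd]

namespace HolQ

open SemidirectProduct Subgroup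

theorem Asub_eq_ker_rightHom : Asub = rightHom.ker := range_inl_eq_ker_rightHom

theorem ratMulAction_apply (b : posRatUnits) (x : ℚ) :
    ratMulAction b (ofAdd x) = ofAdd (((b : ℚˣ) : ℚ) * x) := rfl

theorem conj_inl (g : HolQ) (x : ℚ) :
    g * inl (ofAdd x) * g⁻¹ = inl (ofAdd (((g.right : ℚˣ) : ℚ) * x)) := by
  ext
  · simp only [mul_left, inv_left, mul_right, left_inl, right_inl, mul_one, map_inv,
      MulAut.apply_inv_self, ratMulAction_apply, toAdd_mul, toAdd_inv, toAdd_ofAdd]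
    ring
  · simp

theorem inl_mul_mem_of_normal {N : Subgroup HolQ} (hN : N.Normal) {q x : ℚ} (hq : q ≠ 0)
    (hx : inl (ofAdd x) ∈ N) : inl (ofAdd (q * x)) ∈ N := by
  have scale : ∀ r : ℚ, 0 < r → inl (ofAdd (r * x)) ∈ N := fun r hr => by
    simpa [conj_inl] using hN.conj_mem _ hx (inr ⟨Units.mk0 r hr.ne', hr⟩)
  rcases hq.lt_or_gt with hq | hq
  · have := inv_mem (scale (-q) (neg_pos.2 hq))
    rwa [← map_inv, ← ofAdd_neg, neg_mul, neg_neg] at this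
  · exact scale q hq

theorem Asub_le_of_normal {N : Subgroup HolQ} (hN : N.Normal) {x : Multiplicative ℚ}
    (hx : x ≠ 1) (hxN : inl x ∈ N) : Asub ≤ N := by
  rintro _ ⟨y, rfl⟩
  have hx0 : toAdd x ≠ 0 := toAdd_eq_zero.not.2 hx
  obtain hy | hy := eq_or_ne (toAdd y) 0
  · simp [toAdd_eq_zero.1 hy, one_mem]
  simpa [div_mul_cancel₀ _ hx0] using
    inl_mul_mem_of_normal hN (div_ne_zero hy hx0) (x := toAdd x) hxN

theorem Asub_le_of_le_normalizer {K : Subgroup HolQ} (hK : Asub ≤ normalizer K)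
    (hKA : ¬ K ≤ Asub) : Asub ≤ K := by
  obtain ⟨h, hhK, hhA⟩ := SetLike.not_le_iff_exists.1 hKA
  set b : ℚ := ((h.right : ℚˣ) : ℚ)
  have hb : 1 - b ≠ 0 := by
    refine sub_ne_zero.2 fun hb => hhA ?_
    rw [Asub_eq_ker_rightHom, MonoidHom.mem_ker, rightHom_eq_right]
    exact Subtype.ext (Units.ext hb.symm)
  rintro _ ⟨y, rfl⟩
  set z : HolQ := inl (ofAdd (toAdd y / (1 - b)))
  have hz : z * h * z⁻¹ ∈ K := (mem_normalizer_iff.1 (hK ⟨_, rfl⟩) h).1 hhK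
  -- `[inl u, h] = inl ((1 - b) * u)`, and `z` takes `u = y / (1 - b)`
  have hcomm : z * h * z⁻¹ * h⁻¹ = inl y := by
    have hz_inv : z⁻¹ = inl (ofAdd (-(toAdd y / (1 - b)))) := by rw [← map_inv]; rfl
    rw [show z * h * z⁻¹ * h⁻¹ = z * (h * z⁻¹ * h⁻¹) by group, hz_inv, conj_inl,
      ← map_mul, ← ofAdd_add]
    conv_rhs => rw [← ofAdd_toAdd y]
    congr 2
    field_simp
    ring
  rw [← hcomm]
  exact mul_mem hz (inv_mem hhK)

theorem normal_of_Asub_le {H : Subgroup HolQ} (hH : Asub ≤ H) : H.Normal :=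
  Subgroup.normal_of_ker_le rightHom (Asub_eq_ker_rightHom ▸ hH)

theorem hasFiniteRank_of_le_Asub {H : Subgroup HolQ} (hH : H ≤ Asub) : HasFiniteRank H := by
  let e : Asub ≃* Multiplicative ℚ :=
    (MonoidHom.ofInjective (inl_injective (φ := ratMulAction))).symm
  exact (isLocallyCyclic_multiplicative_rat.of_injective
    (e.toMonoidHom.comp (inclusion hH))
    (e.injective.comp (inclusion_injective hH))).hasFiniteRank

theorem Asub_le_of_commensurable {H N : Subgroup HolQ} (hHA : H ≤ Asub) (hH : H ≠ ⊥)
    (hN : N.Normal) (hHN : H.Commensurable N) : Asub ≤ H := by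
  obtain ⟨⟨g, hgH⟩, hg⟩ := ne_bot_iff_exists_ne_one.1 hH
  obtain ⟨x, rfl⟩ := hHA hgH
  obtain ⟨n, hn, -, hxn⟩ := exists_pow_mem_of_relIndex_ne_zero hHN.2 hgH
  have hx : x ≠ 1 := by rintro rfl; simp at hg
  have hAN : Asub ≤ N :=
    Asub_le_of_normal hN ((pow_eq_one_iff_left hn.ne').not.2 hx) (by simpa using hxn.1)
  have hHA' : H.relIndex Asub ≠ 0 :=
    fun h => hHN.1 (relIndex_eq_zero_of_le_right hAN h)
  have htop : H.comap inl = ⊤ :=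
    eq_top_of_index_ne_zero (by rwa [index_comap])
  rintro _ ⟨y, rfl⟩
  exact mem_comap.1 (htop ▸ mem_top y)

end HolQ

end

theorem holomorph_example :
    (∀ H : Subgroup HolQ, H ≤ Asub → H ≠ ⊥ → H ≠ Asub → ¬ IsCN H) ∧
    (∀ H : Subgroup HolQ, IsSubnormal H → ¬ HasFiniteRank H → H.Normal) ∧
    (∀ H : Subgroup HolQ, IsSubnormal H → ¬ H ≤ Asub → H.Normal) := by
  have normal_of_not_le (H : Subgroup HolQ) (hH : IsSubnormal H) (hHA : ¬ H ≤ Asub) : H.Normal :=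
    HolQ.normal_of_Asub_le
      (hH.isSubnormal.le_of_not_le (fun _ => HolQ.Asub_le_of_le_normalizer) hHA)
  refine ⟨?_, fun H hH hrank => normal_of_not_le H hH fun hHA =>
    hrank (HolQ.hasFiniteRank_of_le_Asub hHA), normal_of_not_le⟩
  rintro H hHA hH hne ⟨N, hN, hHN⟩
  exact hne (le_antisymm hHA (HolQ.Asub_le_of_commensurable hHA hH hN hHN))
end

section
/- If H₁ and H₂ are subgroups of a group G, each commensurable with a normal subgroup of G, and the product set H₁H₂ is a subgroup of G, then H₁H₂ is commensurable with a normal subgroup of G. -/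
open scoped Pointwise

namespace Subgroup

variable {G : Type*} [Group G]

theorem relIndex_ne_zero_of_le_left {H K L : Subgroup G} (hHK : H ≤ K) (h : H.relIndex L ≠ 0) :
    K.relIndex L ≠ 0 :=
  mt (relIndex_eq_zero_of_le_left hHK) h

theorem Commensurable.of_le {A B : Subgroup G} (hAB : A ≤ B) (h : A.relIndex B ≠ 0) :
    Commensurable A B :=
  ⟨h, by rw [relIndex_eq_one.2 hAB]; exact one_ne_zero⟩

section ProductSet

variable {A B L : Subgroup G}

theorem le_of_coe_eq_mul_left (hL : (L : Set G) = A * B) : A ≤ L := fun a ha =>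
  show a ∈ (L : Set G) from hL ▸ Set.subset_mul_left (A : Set G) B.one_mem ha

theorem le_of_coe_eq_mul_right (hL : (L : Set G) = A * B) : B ≤ L := fun b hb =>
  show b ∈ (L : Set G) from hL ▸ Set.subset_mul_right (B : Set G) A.one_mem hb

theorem relIndex_ne_zero_of_coe_eq_mul (hL : (L : Set G) = A * B) (hA : B.relIndex A ≠ 0) :
    B.relIndex L ≠ 0 := by
  have : Finite (A ⧸ B.subgroupOf A) := (Nat.card_ne_zero.mp hA).2
  have hsurj :
      Function.Surjective (quotientSubgroupOfEmbeddingOfLE B (le_of_coe_eq_mul_left hL)) := by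
    intro x
    obtain ⟨⟨l, hl⟩, rfl⟩ := QuotientGroup.mk_surjective x
    rw [← SetLike.mem_coe, hL, Set.mem_mul] at hl
    obtain ⟨a, ha, b, hb, rfl⟩ := hl
    refine ⟨QuotientGroup.mk ⟨a, ha⟩, ?_⟩
    rw [quotientSubgroupOfEmbeddingOfLE_apply_mk, QuotientGroup.eq, mem_subgroupOf]
    simpa using hb
  have := Finite.of_surjective _ hsurj
  exact index_ne_zero_of_finite

theorem relIndex_sup_ne_zero_of_coe_eq_mul {N : Subgroup G} [N.Normal]
    (hL : (L : Set G) = A * B) (hA : (N ⊔ B).relIndex A ≠ 0) :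
    (N ⊔ B).relIndex (N ⊔ L) ≠ 0 :=
  relIndex_ne_zero_of_coe_eq_mul
    (by rw [sup_comm, mul_normal, hL, mul_assoc, ← mul_normal, sup_comm]) hA

end ProductSet

theorem commensurable_sup_of_le (N : Subgroup G) [N.Normal] {A C : Subgroup G} (hCA : C ≤ A)
    (h : C.relIndex A ≠ 0) : Commensurable (N ⊔ C) (N ⊔ A) := by
  have hA : (A : Set G) = A * C :=
    (Set.subset_mul_left _ C.one_mem).antisymm
      ((Set.mul_subset_mul_left hCA).trans (coe_mul_coe A).subset)
  exact .of_le (sup_le_sup_left hCA N)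
    (relIndex_sup_ne_zero_of_coe_eq_mul hA (relIndex_ne_zero_of_le_left le_sup_right h))

theorem Commensurable.sup_left (N : Subgroup G) [N.Normal] {A B : Subgroup G}
    (h : Commensurable A B) : Commensurable (N ⊔ A) (N ⊔ B) := by
  have hA := commensurable_sup_of_le N inf_le_left (by rw [inf_relIndex_left]; exact h.2)
  have hB := commensurable_sup_of_le N inf_le_right (by rw [inf_relIndex_right]; exact h.1)
  exact hA.symm.trans hB

end Subgroup

open Subgroup

theorem mul_isCN {G : Type*} [Group G] (H₁ H₂ : Subgroup G)
    (h1 : IsCN H₁) (h2 : IsCN H₂) (K : Subgroup G)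
    (hK : (K : Set G) = {x : G | ∃ a ∈ H₁, ∃ b ∈ H₂, x = a * b}) : IsCN K := by
  obtain ⟨N₁, hN₁, hH₁N₁⟩ := h1
  obtain ⟨N₂, hN₂, hH₂N₂⟩ := h2
  have hK' : (K : Set G) = H₁ * H₂ := by
    rw [hK]
    ext
    simp [Set.mem_mul, eq_comm]
  have hK_sup : Commensurable K (N₁ ⊔ K) :=
    .of_le le_sup_right (relIndex_ne_zero_of_coe_eq_mul (normal_mul N₁ K)
      (relIndex_ne_zero_of_le_left (le_of_coe_eq_mul_left hK') hH₁N₁.1))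
  have hsup_sup : Commensurable (N₁ ⊔ H₂) (N₁ ⊔ K) :=
    .of_le (sup_le_sup_left (le_of_coe_eq_mul_right hK') N₁)
      (relIndex_sup_ne_zero_of_coe_eq_mul hK' (relIndex_ne_zero_of_le_left le_sup_left hH₁N₁.2))
  exact ⟨N₁ ⊔ N₂, sup_normal N₁ N₂, hK_sup.trans (hsup_sup.symm.trans (hH₂N₂.sup_left N₁))⟩
end
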